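/- arXiv:1710.02376 — 2 statements merged into one kernel-verified Lean document; each statement's English description precedes it below -/
import Mathlib

section
/- Let G be a finite simple graph on a vertex set V which is a tree (connected and acyclic), and let ℓ : V → ℕ be a level function on G, i.e. ℓ v ≥ 1 for all v and for every edge {u, v} of G either ℓ u divides ℓ v with ℓ u < ℓ v, or ℓ v divides ℓ u with ℓ v < ℓ u. Call a vertex v a root if no neighbor u of v has ℓ u < ℓ v, and define the weight w(G) := Σ_{{u,v} ∈ E(G)} max(ℓ u, ℓ v) − Σ_{v ∈ V} ℓ v. If G has exactly one root r, then every non-root vertex has exactly one neighbor of strictly smaller level, and w(G) = −ℓ r. -/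
/-- Let `G` be a finite tree with a level function `ℓ` (each edge joins a
vertex to one of strictly larger level divisible by the smaller one). If `G` has exactly
one root `r` (a vertex with no neighbor of smaller level), then every non-root vertex has
exactly one neighbor of strictly smaller level, and the weight
`∑_{{u,v} ∈ E} max(ℓu, ℓv) - ∑_v ℓv` equals `-ℓ r`. -/
theorem rooted_tree_weight {V : Type*} [Fintype V] [DecidableEq V]
    (G : SimpleGraph V) [DecidableRel G.Adj] (hG : G.IsTree)
    (ℓ : V → ℕ) (hpos : ∀ v, 1 ≤ ℓ v)
    (hlev : ∀ u v, G.Adj u v → (ℓ u ∣ ℓ v ∧ ℓ u < ℓ v) ∨ (ℓ v ∣ ℓ u ∧ ℓ v < ℓ u))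
    (r : V) (hr : ∀ u, G.Adj u r → ¬ ℓ u < ℓ r)
    (huniq : ∀ v, (∀ u, G.Adj u v → ¬ ℓ u < ℓ v) → v = r) :
    (∀ v, v ≠ r → ∃! u, G.Adj u v ∧ ℓ u < ℓ v) ∧
    (∑ e ∈ G.edgeFinset,
        Sym2.lift ⟨fun u v => (max (ℓ u) (ℓ v) : ℤ), fun u v => max_comm _ _⟩ e) -
      ∑ v, (ℓ v : ℤ) = -(ℓ r : ℤ) := by
  classical
  letI : LinearOrder V := LinearOrder.lift' (Fintype.equivFin V) (Fintype.equivFin V).injective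
  -- the "bigger endpoint" map on unordered pairs
  set big : Sym2 V → V := Sym2.lift ⟨fun u v =>
      if ℓ u < ℓ v then v else if ℓ v < ℓ u then u else max u v, by
    intro u v
    rcases lt_trichotomy (ℓ u) (ℓ v) with h | h | h
    · simp [h, asymm h]
    · simp [h, max_comm]
    · simp [h, asymm h]⟩ with hbigdef
  have hbig : ∀ u v : V, ℓ u < ℓ v → big s(u, v) = v := by
    intro u v h
    simp [hbigdef, h]
  -- big of an edge is a non-root vertex
  have hmem : ∀ e ∈ G.edgeFinset, big e ∈ Finset.univ.erase r := by
    intro e he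
    induction e with
    | _ u v =>
      rw [SimpleGraph.mem_edgeFinset, SimpleGraph.mem_edgeSet] at he
      rcases hlev u v he with ⟨_, h⟩ | ⟨_, h⟩
      · rw [hbig u v h]
        exact Finset.mem_erase.2 ⟨fun hvr => hr u (hvr ▸ he) (hvr ▸ h), Finset.mem_univ _⟩
      · rw [Sym2.eq_swap, hbig v u h]
        exact Finset.mem_erase.2 ⟨fun hur => hr v (hur ▸ he.symm) (hur ▸ h), Finset.mem_univ _⟩
  -- every non-root vertex has a smaller neighbor
  have hexists : ∀ v, v ≠ r → ∃ u, G.Adj u v ∧ ℓ u < ℓ v := by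
    intro v hv
    by_contra h
    push_neg at h
    exact hv (huniq v fun u hu => not_lt.2 (h u hu))
  have hsurj : ∀ v ∈ Finset.univ.erase r, ∃ e, ∃ _ : e ∈ G.edgeFinset, big e = v := by
    intro v hv
    obtain ⟨u, hadj, hlt⟩ := hexists v (Finset.mem_erase.1 hv).1
    exact ⟨s(u, v), by rwa [SimpleGraph.mem_edgeFinset, SimpleGraph.mem_edgeSet],
      hbig u v hlt⟩
  -- cardinalities match
  have hcard : G.edgeFinset.card = (Finset.univ.erase r).card := by
    have h1 := hG.card_edgeFinset
    rw [Finset.card_erase_of_mem (Finset.mem_univ r), Finset.card_univ]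
    omega
  -- injectivity of big on edges
  have hinj : ∀ ⦃e₁⦄, e₁ ∈ G.edgeFinset → ∀ ⦃e₂⦄, e₂ ∈ G.edgeFinset →
      big e₁ = big e₂ → e₁ = e₂ :=
    Finset.inj_on_of_surj_on_of_card_le (fun e _ => big e) hmem
      (fun v hv => by obtain ⟨e, he, h⟩ := hsurj v hv; exact ⟨e, he, h⟩) hcard.le
  -- first conjunct: unique smaller neighbor
  have huniqsmall : ∀ v, v ≠ r → ∃! u, G.Adj u v ∧ ℓ u < ℓ v := by
    intro v hv
    obtain ⟨u, hadj, hlt⟩ := hexists v hv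
    refine ⟨u, ⟨hadj, hlt⟩, ?_⟩
    intro u' ⟨hadj', hlt'⟩
    have he : s(u, v) ∈ G.edgeFinset := by
      rwa [SimpleGraph.mem_edgeFinset, SimpleGraph.mem_edgeSet]
    have he' : s(u', v) ∈ G.edgeFinset := by
      rwa [SimpleGraph.mem_edgeFinset, SimpleGraph.mem_edgeSet]
    have := hinj he' he (by rw [hbig u v hlt, hbig u' v hlt'])
    rw [Sym2.eq_iff] at this
    rcases this with ⟨h1, _⟩ | ⟨h1, h2⟩
    · exact h1
    · subst h1; exact absurd hlt' (lt_irrefl _)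
  refine ⟨huniqsmall, ?_⟩
  -- the sum over edges equals the sum of levels over non-root vertices
  have hsum : (∑ e ∈ G.edgeFinset,
      Sym2.lift ⟨fun u v => (max (ℓ u) (ℓ v) : ℤ), fun u v => max_comm _ _⟩ e)
      = ∑ v ∈ Finset.univ.erase r, (ℓ v : ℤ) := by
    have h1 : ∀ e ∈ G.edgeFinset,
        Sym2.lift ⟨fun u v => (max (ℓ u) (ℓ v) : ℤ), fun u v => max_comm _ _⟩ e
          = (ℓ (big e) : ℤ) := by
      intro e he
      induction e with
      | _ u v =>
        rw [SimpleGraph.mem_edgeFinset, SimpleGraph.mem_edgeSet] at he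
        rcases hlev u v he with ⟨_, h⟩ | ⟨_, h⟩
        · rw [hbig u v h]
          simp only [Sym2.lift_mk]
          omega
        · rw [Sym2.eq_swap, hbig v u h]
          simp only [Sym2.lift_mk]
          omega
    rw [Finset.sum_congr rfl h1]
    have himg : G.edgeFinset.image big = Finset.univ.erase r := by
      apply Finset.eq_of_subset_of_card_le
      · intro v hv
        obtain ⟨e, he, h⟩ := Finset.mem_image.1 hv
        exact h ▸ hmem e he
      · rw [Finset.card_image_of_injOn hinj]
        exact hcard.ge
    rw [← himg, Finset.sum_image (fun e he e' he' h => hinj he he' h)]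
  rw [hsum, ← Finset.sum_erase_add Finset.univ _ (Finset.mem_univ r)]
  ring
end

section
/- Let G be a finite simple connected graph on a vertex set V and let ℓ : V → ℕ be a level function on G, i.e. ℓ v ≥ 1 for all v and for every edge {u, v} of G either ℓ u divides ℓ v with ℓ u < ℓ v, or ℓ v divides ℓ u with ℓ v < ℓ u. Call a vertex v a root if no neighbor u of v has ℓ u < ℓ v, and define the weight w(G) := Σ_{{u,v} ∈ E(G)} max(ℓ u, ℓ v) − Σ_{v ∈ V} ℓ v. If G is not a tree with exactly one root — that is, if G either contains a cycle or has at least two roots — then w(G) ≥ 0. -/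
/-!
Every non-root `v` picks a neighbour of smaller level as its parent; following parents from any
vertex ends in a root. The parent edges are pairwise distinct and the parent edge of `v` weighs
exactly `ℓ v`, so they pay for all non-roots, and the roots must be paid by the remaining edges.
Adjacent levels differ at least by a factor `2`, hence an edge `uv` with `ℓ u ≤ ℓ v` weighs
`ℓ v ≥ ℓ (root of u) + ℓ (root of v)`. Finally every root is the root of an endpoint of some
non-parent edge: given a second root, a path to it must leave the parent tree of the first; given
a single root, the parent edges form a spanning tree, so a cycle needs one more edge.
-/

open Finset

theorem Nat.two_mul_le_of_dvd_of_lt {a b : ℕ} (hdvd : a ∣ b) (hlt : a < b) : 2 * a ≤ b := by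
  obtain ⟨k, rfl⟩ := hdvd
  have hk : 2 ≤ k := by
    by_contra! hk
    interval_cases k <;> omega
  exact mul_comm 2 a ▸ Nat.mul_le_mul_left a hk

namespace SimpleGraph

variable {V : Type*} (G : SimpleGraph V) (ℓ : V → ℕ)

def IsLevelRoot (v : V) : Prop := ∀ u, G.Adj u v → ¬ ℓ u < ℓ v

instance [Fintype V] [DecidableRel G.Adj] : DecidablePred (G.IsLevelRoot ℓ) :=
  fun _ => by unfold IsLevelRoot; infer_instance

open Classical in
noncomputable def levelParent (v : V) : V :=
  if h : ∃ u, G.Adj u v ∧ ℓ u < ℓ v then h.choose else v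

variable {G ℓ}

theorem levelParent_adj_and_lt {v : V} (hv : ¬ G.IsLevelRoot ℓ v) :
    G.Adj (G.levelParent ℓ v) v ∧ ℓ (G.levelParent ℓ v) < ℓ v := by
  have h : ∃ u, G.Adj u v ∧ ℓ u < ℓ v := by simpa [IsLevelRoot] using hv
  rw [levelParent, dif_pos h]
  exact h.choose_spec

theorem levelParent_adj {v : V} (hv : ¬ G.IsLevelRoot ℓ v) : G.Adj (G.levelParent ℓ v) v :=
  (levelParent_adj_and_lt hv).1

theorem levelParent_lt {v : V} (hv : ¬ G.IsLevelRoot ℓ v) : ℓ (G.levelParent ℓ v) < ℓ v :=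
  (levelParent_adj_and_lt hv).2

variable (G ℓ) in
open Classical in
noncomputable def levelRoot (v : V) : V :=
  if hv : G.IsLevelRoot ℓ v then v
  else
    have := levelParent_lt hv
    levelRoot (G.levelParent ℓ v)
termination_by ℓ v

theorem levelRoot_of_isLevelRoot {v : V} (hv : G.IsLevelRoot ℓ v) : G.levelRoot ℓ v = v := by
  rw [levelRoot, dif_pos hv]

theorem levelRoot_levelParent {v : V} (hv : ¬ G.IsLevelRoot ℓ v) :
    G.levelRoot ℓ (G.levelParent ℓ v) = G.levelRoot ℓ v := by
  conv_rhs => rw [levelRoot, dif_neg hv]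

theorem isLevelRoot_levelRoot (v : V) : G.IsLevelRoot ℓ (G.levelRoot ℓ v) := by
  by_cases hv : G.IsLevelRoot ℓ v
  · rwa [levelRoot_of_isLevelRoot hv]
  · rw [← levelRoot_levelParent hv]
    exact isLevelRoot_levelRoot _
termination_by ℓ v
decreasing_by exact levelParent_lt hv

theorem level_levelRoot_le (v : V) : ℓ (G.levelRoot ℓ v) ≤ ℓ v := by
  by_cases hv : G.IsLevelRoot ℓ v
  · rw [levelRoot_of_isLevelRoot hv]
  · rw [← levelRoot_levelParent hv]
    exact (level_levelRoot_le _).trans (levelParent_lt hv).le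
termination_by ℓ v
decreasing_by exact levelParent_lt hv

theorem two_mul_level_levelRoot_le
    (hdouble : ∀ u v, G.Adj u v → ℓ u ≤ ℓ v → 2 * ℓ u ≤ ℓ v) {u v : V} (hadj : G.Adj u v)
    (hle : ℓ u ≤ ℓ v) :
    2 * ℓ (G.levelRoot ℓ v) ≤ ℓ v := by
  by_cases hv : G.IsLevelRoot ℓ v
  · have := hdouble u v hadj hle
    have := hv u hadj
    rw [levelRoot_of_isLevelRoot hv]
    omega
  · rw [← levelRoot_levelParent hv]
    have := hdouble _ _ (levelParent_adj hv) (levelParent_lt hv).le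
    have := level_levelRoot_le (G := G) (ℓ := ℓ) (G.levelParent ℓ v)
    omega

theorem level_levelRoot_add_le_max
    (hdouble : ∀ u v, G.Adj u v → ℓ u ≤ ℓ v → 2 * ℓ u ≤ ℓ v) {u v : V} (hadj : G.Adj u v) :
    ℓ (G.levelRoot ℓ u) + ℓ (G.levelRoot ℓ v) ≤ max (ℓ u) (ℓ v) := by
  wlog hle : ℓ u ≤ ℓ v generalizing u v
  · rw [add_comm, max_comm]
    exact this hadj.symm (le_of_not_ge hle)
  have := hdouble u v hadj hle
  have := two_mul_level_levelRoot_le hdouble hadj hle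
  have := level_levelRoot_le (G := G) (ℓ := ℓ) u
  rw [max_eq_right hle]
  omega

section Finite

variable [Fintype V] [DecidableRel G.Adj] [DecidableEq V]

variable (G ℓ) in
noncomputable def parentEdges : Finset (Sym2 V) :=
  ({v | ¬ G.IsLevelRoot ℓ v} : Finset V).image fun v => s(G.levelParent ℓ v, v)

theorem parentEdges_subset_edgeFinset : G.parentEdges ℓ ⊆ G.edgeFinset := by
  intro e he
  obtain ⟨v, hv, rfl⟩ := mem_image.mp he
  exact mem_edgeFinset.mpr (levelParent_adj (mem_filter.mp hv).2)

theorem levelRoot_eq_of_mk_mem_parentEdges {x y : V} (h : s(x, y) ∈ G.parentEdges ℓ) :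
    G.levelRoot ℓ x = G.levelRoot ℓ y := by
  obtain ⟨v, hv, hvxy⟩ := mem_image.mp h
  have hroot := levelRoot_levelParent (mem_filter.mp hv).2
  rcases Sym2.eq_iff.mp hvxy with ⟨rfl, rfl⟩ | ⟨rfl, rfl⟩
  exacts [hroot, hroot.symm]

theorem injOn_parentEdge :
    Set.InjOn (fun v => s(G.levelParent ℓ v, v)) ({v | ¬ G.IsLevelRoot ℓ v} : Finset V) := by
  intro x hx y hy hxy
  have hx' := levelParent_lt (mem_filter.mp hx).2
  have hy' := levelParent_lt (mem_filter.mp hy).2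
  rcases Sym2.eq_iff.mp hxy with ⟨-, h⟩ | ⟨h₁, h₂⟩
  · exact h
  · rw [h₁] at hx'; rw [← h₂] at hy'; omega

theorem card_parentEdges : #(G.parentEdges ℓ) = #({v | ¬ G.IsLevelRoot ℓ v} : Finset V) :=
  card_image_of_injOn injOn_parentEdge

theorem sum_sup_parentEdges :
    ∑ e ∈ G.parentEdges ℓ, (e.map ℓ).sup = ∑ v with ¬ G.IsLevelRoot ℓ v, ℓ v := by
  rw [parentEdges, sum_image injOn_parentEdge]
  refine sum_congr rfl fun v hv => ?_
  simpa using (levelParent_lt (mem_filter.mp hv).2).le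

theorem isAcyclic_of_edgeFinset_subset_parentEdges (hconn : G.Connected)
    (hE : G.edgeFinset ⊆ G.parentEdges ℓ) : G.IsAcyclic := by
  obtain ⟨v⟩ := hconn.nonempty
  have hroots : 0 < #(univ.filter (G.IsLevelRoot ℓ)) :=
    card_pos.mpr ⟨_, mem_filter.mpr ⟨mem_univ _, isLevelRoot_levelRoot v⟩⟩
  have hsplit := card_filter_add_card_filter_not (s := univ) (G.IsLevelRoot ℓ)
  have hcard := (card_le_card hE).trans_eq card_parentEdges
  have hconn_card := hconn.card_vert_le_card_edgeSet_add_one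
  refine (isTree_iff_connected_and_card.mpr ⟨hconn, ?_⟩).isAcyclic
  rw [Nat.card_eq_fintype_card, Nat.card_eq_fintype_card, ← edgeFinset_card] at hconn_card ⊢
  rw [card_univ] at hsplit
  omega

theorem exists_edge_notMem_parentEdges_of_ne {r r' : V} (hconn : G.Connected)
    (hr : G.IsLevelRoot ℓ r) (hr' : G.IsLevelRoot ℓ r') (hne : r ≠ r') :
    ∃ e ∈ G.edgeFinset \ G.parentEdges ℓ, ∃ x ∈ e, G.levelRoot ℓ x = r := by
  obtain ⟨d, -, hfst, hsnd⟩ := (hconn.preconnected r r').some.exists_boundary_dart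
    {x | G.levelRoot ℓ x = r} (levelRoot_of_isLevelRoot hr)
    (by simpa [levelRoot_of_isLevelRoot hr'] using hne.symm)
  refine ⟨d.edge, mem_sdiff.mpr ⟨mem_edgeFinset.mpr d.edge_mem, fun h => hsnd ?_⟩,
    d.fst, Sym2.mem_mk_left _ _, hfst⟩
  exact (levelRoot_eq_of_mk_mem_parentEdges h).symm.trans hfst

theorem exists_edge_notMem_parentEdges_levelRoot_eq (hconn : G.Connected)
    (h : ¬ G.IsAcyclic ∨ ∃ r₁ r₂, r₁ ≠ r₂ ∧ G.IsLevelRoot ℓ r₁ ∧ G.IsLevelRoot ℓ r₂)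
    {r : V} (hr : G.IsLevelRoot ℓ r) :
    ∃ e ∈ G.edgeFinset \ G.parentEdges ℓ, ∃ x ∈ e, G.levelRoot ℓ x = r := by
  by_cases hother : ∃ r', G.IsLevelRoot ℓ r' ∧ r ≠ r'
  · obtain ⟨r', hr', hne⟩ := hother
    exact exists_edge_notMem_parentEdges_of_ne hconn hr hr' hne
  push Not at hother
  have hcyc : ¬ G.IsAcyclic := h.resolve_right fun ⟨r₁, r₂, hne, h₁, h₂⟩ =>
    hne ((hother r₁ h₁).symm.trans (hother r₂ h₂))
  obtain ⟨e, he⟩ : (G.edgeFinset \ G.parentEdges ℓ).Nonempty :=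
    sdiff_nonempty.mpr fun hE => hcyc (isAcyclic_of_edgeFinset_subset_parentEdges hconn hE)
  exact ⟨e, he, _, e.out_fst_mem, (hother _ (isLevelRoot_levelRoot _)).symm⟩

theorem sum_level_isLevelRoot_le
    (hdouble : ∀ u v, G.Adj u v → ℓ u ≤ ℓ v → 2 * ℓ u ≤ ℓ v) {X : Finset (Sym2 V)}
    (hX : X ⊆ G.edgeFinset)
    (hcover : ∀ r, G.IsLevelRoot ℓ r → ∃ e ∈ X, ∃ x ∈ e, G.levelRoot ℓ x = r) :
    ∑ r with G.IsLevelRoot ℓ r, ℓ r ≤ ∑ e ∈ X, (e.map ℓ).sup := by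
  set ends := X.sigma fun e => e.toFinset
  calc ∑ r with G.IsLevelRoot ℓ r, ℓ r
      ≤ ∑ r ∈ ends.image fun p => G.levelRoot ℓ p.2, ℓ r := by
        refine sum_le_sum_of_subset fun r hr => ?_
        obtain ⟨e, he, x, hx, rfl⟩ := hcover r (mem_filter.mp hr).2
        exact mem_image.mpr ⟨⟨e, x⟩, mem_sigma.mpr ⟨he, Sym2.mem_toFinset.mpr hx⟩, rfl⟩
    _ ≤ ∑ p ∈ ends, ℓ (G.levelRoot ℓ p.2) := sum_image_le_of_nonneg fun _ _ => Nat.zero_le _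
    _ = ∑ e ∈ X, ∑ x ∈ e.toFinset, ℓ (G.levelRoot ℓ x) := sum_sigma _ _ _
    _ ≤ ∑ e ∈ X, (e.map ℓ).sup := sum_le_sum fun e he => ?_
  induction e using Sym2.ind with
  | _ u v =>
    have hadj := mem_edgeFinset.mp (hX he)
    rw [Sym2.toFinset_mk_eq, sum_pair hadj.ne]
    simpa using level_levelRoot_add_le_max hdouble hadj

theorem sum_level_le_sum_sup_edgeFinset
    (hdouble : ∀ u v, G.Adj u v → ℓ u ≤ ℓ v → 2 * ℓ u ≤ ℓ v) (hconn : G.Connected)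
    (h : ¬ G.IsAcyclic ∨ ∃ r₁ r₂, r₁ ≠ r₂ ∧ G.IsLevelRoot ℓ r₁ ∧ G.IsLevelRoot ℓ r₂) :
    ∑ v, ℓ v ≤ ∑ e ∈ G.edgeFinset, (e.map ℓ).sup := by
  rw [← sum_filter_add_sum_filter_not univ (G.IsLevelRoot ℓ),
    ← sum_sdiff parentEdges_subset_edgeFinset, sum_sup_parentEdges]
  gcongr
  exact sum_level_isLevelRoot_le hdouble sdiff_subset fun r hr =>
    exists_edge_notMem_parentEdges_levelRoot_eq hconn h hr

end Finite

end SimpleGraph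

theorem non_rooted_tree_weight_nonneg_general {V : Type*} [Fintype V] [DecidableEq V]
    (G : SimpleGraph V) [DecidableRel G.Adj] (hconn : G.Connected)
    (ℓ : V → ℕ)
    (hlev : ∀ u v, G.Adj u v → (ℓ u ∣ ℓ v ∧ ℓ u < ℓ v) ∨ (ℓ v ∣ ℓ u ∧ ℓ v < ℓ u))
    (h : ¬ G.IsAcyclic ∨
      ∃ r₁ r₂ : V, r₁ ≠ r₂ ∧ (∀ u, G.Adj u r₁ → ¬ ℓ u < ℓ r₁) ∧
        (∀ u, G.Adj u r₂ → ¬ ℓ u < ℓ r₂)) :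
    0 ≤ (∑ e ∈ G.edgeFinset,
        Sym2.lift ⟨fun u v => (max (ℓ u) (ℓ v) : ℤ), fun u v => max_comm _ _⟩ e) -
      ∑ v, (ℓ v : ℤ) := by
  have hdouble : ∀ u v, G.Adj u v → ℓ u ≤ ℓ v → 2 * ℓ u ≤ ℓ v := fun u v hadj hle =>
    (hlev u v hadj).elim (fun h => Nat.two_mul_le_of_dvd_of_lt h.1 h.2)
      fun h => absurd hle (not_le.mpr h.2)
  have hcast (e : Sym2 V) :
      Sym2.lift ⟨fun u v => (max (ℓ u) (ℓ v) : ℤ), fun _ _ => max_comm _ _⟩ e =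
        ((e.map ℓ).sup : ℤ) := by
    induction e using Sym2.ind with
    | _ u v => simp
  rw [sum_congr rfl fun e _ => hcast e, sub_nonneg]
  exact_mod_cast G.sum_level_le_sum_sup_edgeFinset hdouble hconn h

/-- Let `G` be a finite connected simple graph with a level function `ℓ`
(each edge joins a vertex to one of strictly larger level divisible by the smaller one).
If `G` is not a tree with exactly one root — i.e. `G` contains a cycle or has at least
two roots (vertices with no neighbor of smaller level) — then the weight
`∑_{{u,v} ∈ E} max(ℓu, ℓv) - ∑_v ℓv` is non-negative. -/
theorem non_rooted_tree_weight_nonneg {V : Type*} [Fintype V] [DecidableEq V]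
    (G : SimpleGraph V) [DecidableRel G.Adj] (hconn : G.Connected)
    (ℓ : V → ℕ) (hpos : ∀ v, 1 ≤ ℓ v)
    (hlev : ∀ u v, G.Adj u v → (ℓ u ∣ ℓ v ∧ ℓ u < ℓ v) ∨ (ℓ v ∣ ℓ u ∧ ℓ v < ℓ u))
    (h : ¬ G.IsAcyclic ∨
      ∃ r₁ r₂ : V, r₁ ≠ r₂ ∧ (∀ u, G.Adj u r₁ → ¬ ℓ u < ℓ r₁) ∧
        (∀ u, G.Adj u r₂ → ¬ ℓ u < ℓ r₂)) :
    0 ≤ (∑ e ∈ G.edgeFinset,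
        Sym2.lift ⟨fun u v => (max (ℓ u) (ℓ v) : ℤ), fun u v => max_comm _ _⟩ e) -
      ∑ v, (ℓ v : ℤ) :=
  non_rooted_tree_weight_nonneg_general G hconn ℓ hlev h
end
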